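/- Fix integers r ≥ 2, m ≥ 2, and 1 ≤ t ≤ 2^m − 1. Choose m_0 ∈ [m] with 2^{m_0−1} − 1 < t ≤ 2^{m_0} − 1, and set t_1 = 2^{m_0−1} − 1, t_2 = t − t_1 − 1, A = Ω_{t_1}^{(m)}, B = Ω_t^{(m)} \ A, and A_j = {α ∈ A : the m_0-th coordinate (from the right) of α equals j} for j ∈ Z_r. For j ∈ Z_{r+1}, let ψ_j : Z_{r+1}^{m−1} → Z_{r+1}^m be the map inserting j as the m_0-th coordinate from the right. Let C be a binary linear code with coordinates indexed by Ω_t^{(m)} whose codewords satisfy x_α = Σ_{β∈L^{(m)}(α)} x_β for all α ∈ Ω_t^{(m)}\Ω_0^{(m)}. Then: (1) for each j ∈ Z_r, ψ_j restricts to a bijection from Ω_{t_1}^{(m−1)} onto A_j, and every codeword x ∈ C satisfies x_{ψ_j(α)} = Σ_{β∈L^{(m−1)}(α)} x_{ψ_j(β)} for all α ∈ Ω_{t_1}^{(m−1)}\Ω_0^{(m−1)}; (2) if t_2 ≥ 1, then ψ_r restricts to a bijection from Ω_{t_2}^{(m−1)} onto B, and every codeword x ∈ C satisfies x_{ψ_r(α)}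 = Σ_{β∈L^{(m−1)}(α)} x_{ψ_r(β)} for all α ∈ Ω_{t_2}^{(m−1)}\Ω_0^{(m−1)}. -/

import Mathlib

open Finset

/-- `supp_m(s)`: the support of the `m`-digit binary representation of `s`,
with digit `ℓ` (0-indexed) corresponding to `2^ℓ`. -/
def suppm (m s : ℕ) : Finset (Fin m) :=
  Finset.univ.filter (fun ℓ => s.testBit ℓ.val)

/-- `U(α) = {ℓ ∈ [m] : α_ℓ = r}`, for `α ∈ Z_{r+1}^m`. -/
def Uset (r m : ℕ) (α : Fin m → Fin (r + 1)) : Finset (Fin m) :=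
  Finset.univ.filter (fun ℓ => (α ℓ : ℕ) = r)

/-- `L(α) = {β ∈ Z_r^m : β_ℓ = α_ℓ for all ℓ with α_ℓ < r}`, with
`Z_r ⊆ Z_{r+1}` viewed as the elements of value `< r`. -/
def Lset (r m : ℕ) (α : Fin m → Fin (r + 1)) : Finset (Fin m → Fin (r + 1)) :=
  Finset.univ.filter (fun β =>
    (∀ ℓ, (β ℓ : ℕ) < r) ∧ ∀ ℓ, (α ℓ : ℕ) < r → β ℓ = α ℓ)

/-- `Γ_s = {α ∈ Z_{r+1}^m : U(α) = supp_m(s)}`. -/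
def Gam (r m s : ℕ) : Finset (Fin m → Fin (r + 1)) :=
  Finset.univ.filter (fun α => Uset r m α = suppm m s)

/-- `Ω_t^{(m)} = ⋃_{s=0}^{t} Γ_s`. -/
def Omeg (r m t : ℕ) : Finset (Fin m → Fin (r + 1)) :=
  (Finset.range (t + 1)).biUnion (Gam r m)

/-- The coordinate index set `Ω_t^{(m)}` as a type. -/
abbrev OmegIdx (r m t : ℕ) : Type := {α : Fin m → Fin (r + 1) // α ∈ Omeg r m t}

/-- The columns of the row of `H_t^{(m)}` indexed by `α`, other than `α` itself:
the coordinates in `Ω_t^{(m)}` whose index lies in `L(α)`. -/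
def LIdx (r m t : ℕ) (α : Fin m → Fin (r + 1)) : Finset (OmegIdx r m t) :=
  Finset.univ.filter (fun β => β.1 ∈ Lset r m α)

/-!
Since `∑_{ℓ ∈ U(α)} 2^ℓ` is the least `s` with `α ∈ Γ_s`, membership `α ∈ Ω_t` means that this
number is at most `t`; in particular `Ω_{2^k-1}` consists of the `α` with `U(α)` below `k`.
Inserting a coordinate `c < r` at position `p` only shifts positions above `p`, which gives the
first bijection. Inserting `r` adds `2^p` to the index of a point of `Ω_{2^p-1}`, and
`2^p ≤ t < 2^(p+1)` forces `α_p = r` on `B`, which gives the second.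

For the checks, `L(ψ_j α) = ψ_j(L(α))` when `j < r`, while `L(ψ_r α)` is the disjoint union of the
`ψ_c(L(α))`, `c < r`. In the second case the checks at the points `ψ_r γ`, `γ ∈ L(α)`, which lie in
`Ω_t` because `2^p ≤ t`, regroup `∑_{c < r} ∑_{γ} x_{ψ_c γ}` into `∑_{γ} x_{ψ_r γ}`.
-/

section extend

variable {ι M : Type*} [AddCommMonoid M] {P : ι → Prop}

lemma extend_val_apply (x : Subtype P → M) {a : ι} (ha : P a) :
    Function.extend Subtype.val x 0 a = x ⟨a, ha⟩ :=
  Subtype.val_injective.extend_apply x 0 ⟨a, ha⟩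

variable [DecidablePred P] [Fintype (Subtype P)] [DecidableEq ι]

lemma sum_filter_val_mem_eq_sum_extend (x : Subtype P → M) {S : Finset ι}
    (hS : ∀ a ∈ S, P a) :
    ∑ β ∈ univ.filter (fun β : Subtype P => β.1 ∈ S), x β =
      ∑ a ∈ S, Function.extend Subtype.val x 0 a := by
  rw [← sum_subtype_of_mem _ hS]
  exact sum_congr (by ext; simp) fun β _ => (extend_val_apply x β.2).symm

lemma sum_filter_val_mem_image_eq_sum_extend {κ : Type*} (x : Subtype P → M) {S : Finset κ}
    {g : κ → ι} (hg : Function.Injective g) (hS : ∀ a ∈ S, P (g a)) :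
    ∑ β ∈ univ.filter (fun β : Subtype P => β.1 ∈ S.image g), x β =
      ∑ a ∈ S, Function.extend Subtype.val x 0 (g a) := by
  rw [sum_filter_val_mem_eq_sum_extend x (by simpa using hS), sum_image hg.injOn]

end extend

section

variable {r m : ℕ}

def gamIndex (r m : ℕ) (α : Fin m → Fin (r + 1)) : ℕ :=
  ∑ ℓ ∈ Uset r m α, 2 ^ (ℓ : ℕ)

@[simp] lemma mem_Uset {α : Fin m → Fin (r + 1)} {ℓ : Fin m} :
    ℓ ∈ Uset r m α ↔ (α ℓ : ℕ) = r := by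
  simp [Uset]

lemma sum_two_pow_val_eq_sum_map (S : Finset (Fin m)) :
    ∑ ℓ ∈ S, 2 ^ (ℓ : ℕ) = ∑ i ∈ S.map Fin.valEmbedding, 2 ^ i := by
  rw [sum_map]; rfl

lemma suppm_sum_two_pow (S : Finset (Fin m)) : suppm m (∑ ℓ ∈ S, 2 ^ (ℓ : ℕ)) = S := by
  ext ℓ
  rw [suppm, mem_filter, sum_two_pow_val_eq_sum_map, ← Nat.mem_bitIndices, ← List.mem_toFinset,
    toFinset_bitIndices_sum_two_pow]
  simp [Fin.val_inj]

lemma sum_two_pow_suppm_le (m s : ℕ) : ∑ ℓ ∈ suppm m s, 2 ^ (ℓ : ℕ) ≤ s := by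
  calc ∑ ℓ ∈ suppm m s, 2 ^ (ℓ : ℕ) ≤ ∑ i ∈ s.bitIndices.toFinset, 2 ^ i := by
        rw [sum_two_pow_val_eq_sum_map]
        refine sum_le_sum_of_subset fun i hi => ?_
        obtain ⟨ℓ, hℓ, rfl⟩ := mem_map.1 hi
        simpa [suppm] using hℓ
    _ = s := sum_toFinset_bitIndices_two_pow s

lemma mem_Omeg_iff_gamIndex_le {t : ℕ} {α : Fin m → Fin (r + 1)} :
    α ∈ Omeg r m t ↔ gamIndex r m α ≤ t := by
  simp only [Omeg, Gam, mem_biUnion, mem_range, mem_filter, mem_univ, true_and]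
  constructor
  · rintro ⟨s, hs, hα⟩
    exact (hα ▸ sum_two_pow_suppm_le m s).trans (Nat.lt_succ_iff.1 hs)
  · exact fun h => ⟨gamIndex r m α, Nat.lt_succ_of_le h, (suppm_sum_two_pow _).symm⟩

lemma Omeg_mono : Monotone (Omeg r m) :=
  fun _ _ hst => biUnion_subset_biUnion_of_subset_left _ (range_subset_range.2 (by omega))

lemma sum_two_pow_lt_two_pow_iff (S : Finset (Fin m)) (k : ℕ) :
    ∑ ℓ ∈ S, 2 ^ (ℓ : ℕ) < 2 ^ k ↔ ∀ ℓ ∈ S, (ℓ : ℕ) < k := by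
  refine ⟨fun h ℓ hℓ => ?_, fun h => ?_⟩
  · exact (Nat.pow_lt_pow_iff_right (by norm_num)).1
      ((single_le_sum (fun _ _ => Nat.zero_le _) hℓ).trans_lt h)
  · rw [sum_two_pow_val_eq_sum_map]
    exact Nat.geomSum_lt le_rfl (by simpa using h)

lemma mem_Omeg_two_pow_sub_one_iff {α : Fin m → Fin (r + 1)} {k : ℕ} :
    α ∈ Omeg r m (2 ^ k - 1) ↔ ∀ ℓ ∈ Uset r m α, (ℓ : ℕ) < k := by
  rw [mem_Omeg_iff_gamIndex_le, ← sum_two_pow_lt_two_pow_iff, gamIndex,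
    Nat.le_sub_one_iff_lt (Nat.two_pow_pos k)]

lemma mem_Omeg_zero_iff {α : Fin m → Fin (r + 1)} :
    α ∈ Omeg r m 0 ↔ ∀ ℓ, (α ℓ : ℕ) < r := by
  have h := mem_Omeg_two_pow_sub_one_iff (α := α) (k := 0)
  simp only [pow_zero, Nat.sub_self, Nat.not_lt_zero, imp_false, mem_Uset] at h
  exact h.trans (forall_congr' fun ℓ => by have := (α ℓ).isLt; omega)

lemma Lset_subset_Omeg (α : Fin m → Fin (r + 1)) (t : ℕ) : Lset r m α ⊆ Omeg r m t :=
  fun _ hβ => Omeg_mono (Nat.zero_le t) (mem_Omeg_zero_iff.2 (mem_filter.1 hβ).2.1)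

section insertNth

variable {p : Fin (m + 1)} {α : Fin m → Fin (r + 1)}

lemma forall_mem_Uset_insertNth {c : Fin (r + 1)} {P : Fin (m + 1) → Prop} :
    (∀ ℓ ∈ Uset r (m + 1) (p.insertNth c α), P ℓ) ↔
      ((c : ℕ) = r → P p) ∧ ∀ ℓ ∈ Uset r m α, P (p.succAbove ℓ) := by
  simp only [mem_Uset]
  rw [Fin.forall_iff_succAbove p]
  simp only [Fin.insertNth_apply_same, Fin.insertNth_apply_succAbove]

lemma val_succAbove_lt_iff {k : ℕ} (hk : k ≤ p) (ℓ : Fin m) :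
    (p.succAbove ℓ : ℕ) < k ↔ (ℓ : ℕ) < k := by
  rcases lt_or_ge ℓ.castSucc p with h | h
  · rw [Fin.succAbove_of_castSucc_lt _ _ h, Fin.val_castSucc]
  · rw [Fin.succAbove_of_le_castSucc _ _ h, Fin.val_succ]
    rw [Fin.le_def, Fin.val_castSucc] at h
    omega

lemma insertNth_mem_Omeg_two_pow_sub_one_iff {c : Fin (r + 1)} (hc : (c : ℕ) < r) {k : ℕ}
    (hk : k ≤ p) :
    p.insertNth c α ∈ Omeg r (m + 1) (2 ^ k - 1) ↔ α ∈ Omeg r m (2 ^ k - 1) := by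
  simp only [mem_Omeg_two_pow_sub_one_iff, forall_mem_Uset_insertNth, hc.ne, false_imp_iff,
    true_and, val_succAbove_lt_iff hk]

lemma insertNth_last_not_mem_Omeg_two_pow_sub_one :
    p.insertNth (Fin.last r) α ∉ Omeg r (m + 1) (2 ^ (p : ℕ) - 1) := by
  rw [mem_Omeg_two_pow_sub_one_iff, forall_mem_Uset_insertNth]
  simp

lemma mem_Omeg_of_insertNth_last_mem
    (h : p.insertNth (Fin.last r) α ∈ Omeg r (m + 1) (2 ^ ((p : ℕ) + 1) - 1)) :
    α ∈ Omeg r m (2 ^ (p : ℕ) - 1) := by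
  rw [mem_Omeg_two_pow_sub_one_iff, forall_mem_Uset_insertNth] at h
  rw [mem_Omeg_two_pow_sub_one_iff]
  intro ℓ hℓ
  have hne : (p.succAbove ℓ : ℕ) ≠ p := Fin.val_ne_of_ne (p.succAbove_ne ℓ)
  exact (val_succAbove_lt_iff le_rfl ℓ).1 (by have := h.2 ℓ hℓ; omega)

lemma gamIndex_insertNth_last (hα : α ∈ Omeg r m (2 ^ (p : ℕ) - 1)) :
    gamIndex r (m + 1) (p.insertNth (Fin.last r) α) = 2 ^ (p : ℕ) + gamIndex r m α := by
  have hU : Uset r (m + 1) (p.insertNth (Fin.last r) α) =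
      insert p ((Uset r m α).map p.succAboveEmb) := by
    ext ℓ
    cases ℓ using p.succAboveCases <;> simp [Fin.succAbove_ne]
  rw [mem_Omeg_two_pow_sub_one_iff] at hα
  rw [gamIndex, hU, sum_insert (by simp [Fin.succAbove_ne]), sum_map, gamIndex]
  congr 1
  refine sum_congr rfl fun ℓ hℓ => ?_
  have hℓp : ℓ.castSucc < p := by simpa [Fin.lt_def] using hα ℓ hℓ
  rw [Fin.succAboveEmb_apply, Fin.succAbove_of_castSucc_lt _ _ hℓp, Fin.val_castSucc]

lemma insertNth_last_mem_Omeg_of_mem_Omeg_zero {t : ℕ} (ht : 2 ^ (p : ℕ) ≤ t)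
    (hα : α ∈ Omeg r m 0) : p.insertNth (Fin.last r) α ∈ Omeg r (m + 1) t := by
  rw [mem_Omeg_iff_gamIndex_le] at hα ⊢
  rw [gamIndex_insertNth_last (Omeg_mono (Nat.zero_le _) (mem_Omeg_iff_gamIndex_le.2 hα))]
  omega

lemma insertNth_last_mem_Omeg_iff {t : ℕ} (ht₁ : 2 ^ (p : ℕ) ≤ t) (ht₂ : t < 2 ^ ((p : ℕ) + 1)) :
    p.insertNth (Fin.last r) α ∈ Omeg r (m + 1) t ↔ α ∈ Omeg r m (t - 2 ^ (p : ℕ)) := by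
  have hpow : 2 ^ ((p : ℕ) + 1) = 2 * 2 ^ (p : ℕ) := by ring
  constructor
  · intro h
    have hα := mem_Omeg_of_insertNth_last_mem (Omeg_mono (by omega) h)
    rw [mem_Omeg_iff_gamIndex_le, gamIndex_insertNth_last hα] at h
    rw [mem_Omeg_iff_gamIndex_le]
    omega
  · intro h
    rw [mem_Omeg_iff_gamIndex_le, gamIndex_insertNth_last (Omeg_mono (by omega) h)]
    rw [mem_Omeg_iff_gamIndex_le] at h
    omega

lemma apply_eq_last_of_mem_Omeg_sdiff {t : ℕ} {b : Fin (m + 1) → Fin (r + 1)}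
    (hb : b ∈ Omeg r (m + 1) t \ Omeg r (m + 1) (2 ^ (p : ℕ) - 1))
    (ht : t < 2 ^ ((p : ℕ) + 1)) : b p = Fin.last r := by
  obtain ⟨hbt, hbp⟩ := mem_sdiff.1 hb
  have hb' := Omeg_mono (Nat.le_sub_one_of_lt ht) hbt
  rw [mem_Omeg_two_pow_sub_one_iff] at hb' hbp
  simp only [not_forall, not_lt] at hbp
  obtain ⟨ℓ, hℓ, hpℓ⟩ := hbp
  obtain rfl : ℓ = p := Fin.ext (by have := hb' ℓ hℓ; omega)
  exact Fin.ext (mem_Uset.1 hℓ)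

lemma bijOn_insertNth {β : Type*} {c : β} {s : Set (Fin m → β)} {t : Set (Fin (m + 1) → β)}
    (hmem : ∀ α, p.insertNth c α ∈ t ↔ α ∈ s) (hp : ∀ b ∈ t, b p = c) :
    Set.BijOn (p.insertNth c) s t := by
  refine ⟨fun α hα => (hmem α).2 hα,
    (Fin.insertNth_right_injective (α := fun _ => β) (p := p) c).injOn, fun b hb => ?_⟩
  have hb' : p.insertNth c (p.removeNth b) = b := hp b hb ▸ Fin.insertNth_self_removeNth p b
  exact ⟨p.removeNth b, (hmem _).1 (hb'.symm ▸ hb), hb'⟩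

end insertNth

section Lset

variable {p : Fin (m + 1)} {α : Fin m → Fin (r + 1)}

lemma insertNth_mem_Lset_insertNth_iff {c j : Fin (r + 1)} {γ : Fin m → Fin (r + 1)} :
    p.insertNth c γ ∈ Lset r (m + 1) (p.insertNth j α) ↔
      ((c : ℕ) < r ∧ ((j : ℕ) < r → c = j)) ∧ γ ∈ Lset r m α := by
  simp only [Lset, mem_filter, mem_univ, true_and]
  rw [Fin.forall_iff_succAbove p, Fin.forall_iff_succAbove p]
  simp only [Fin.insertNth_apply_same, Fin.insertNth_apply_succAbove]
  tauto

lemma sum_Lset_insertNth {M : Type*} [AddCommMonoid M] (j : Fin (r + 1))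
    (f : (Fin (m + 1) → Fin (r + 1)) → M) :
    ∑ β ∈ Lset r (m + 1) (p.insertNth j α), f β =
      ∑ c ∈ univ.filter (fun c : Fin (r + 1) => (c : ℕ) < r ∧ ((j : ℕ) < r → c = j)),
        ∑ γ ∈ Lset r m α, f (p.insertNth c γ) := by
  rw [← sum_product']
  refine (sum_equiv (Fin.insertNthEquiv (fun _ => Fin (r + 1)) p) (fun cγ => ?_)
    (fun _ _ => rfl)).symm
  change _ ↔ Fin.insertNth (α := fun _ => Fin (r + 1)) p cγ.1 cγ.2 ∈ _
  rw [insertNth_mem_Lset_insertNth_iff, mem_product, mem_filter]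
  simp only [mem_univ, true_and]

lemma sum_Lset_insertNth_of_lt {M : Type*} [AddCommMonoid M] {j : Fin (r + 1)}
    (hj : (j : ℕ) < r) (f : (Fin (m + 1) → Fin (r + 1)) → M) :
    ∑ β ∈ Lset r (m + 1) (p.insertNth j α), f β = ∑ γ ∈ Lset r m α, f (p.insertNth j γ) := by
  rw [sum_Lset_insertNth, filter_congr (q := (· = j)) (by grind), filter_eq', if_pos (mem_univ _),
    sum_singleton]

lemma sum_Lset_insertNth_last {M : Type*} [AddCommMonoid M]
    (f : (Fin (m + 1) → Fin (r + 1)) → M) :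
    ∑ β ∈ Lset r (m + 1) (p.insertNth (Fin.last r) α), f β =
      ∑ c ∈ univ.filter (fun c : Fin (r + 1) => (c : ℕ) < r),
        ∑ γ ∈ Lset r m α, f (p.insertNth c γ) := by
  simp [sum_Lset_insertNth]

lemma Lset_eq_singleton (hα : α ∈ Omeg r m 0) : Lset r m α = {α} := by
  rw [mem_Omeg_zero_iff] at hα
  ext β
  simp only [Lset, mem_filter, mem_univ, true_and, mem_singleton]
  exact ⟨fun h => funext fun ℓ => h.2 ℓ (hα ℓ), by rintro rfl; exact ⟨hα, fun _ _ => rfl⟩⟩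

end Lset

section checks

variable {M : Type*} [AddCommMonoid M] {t : ℕ}

def SatisfiesChecks (x : OmegIdx r m t → M) : Prop :=
  ∀ α : OmegIdx r m t, α.1 ∉ Omeg r m 0 → x α = ∑ β ∈ LIdx r m t α.1, x β

-- Extending `x` by zero off `Ω_t` turns the checks into sums over `L(α) ⊆ Ω_0 ⊆ Ω_t` that can be
-- reindexed through `Fin.insertNth`.
lemma extend_eq_sum_Lset {x : OmegIdx r m t → M} (hx : SatisfiesChecks x)
    {a : Fin m → Fin (r + 1)} (ha : a ∈ Omeg r m t) (ha0 : a ∉ Omeg r m 0) :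
    Function.extend Subtype.val x 0 a = ∑ b ∈ Lset r m a, Function.extend Subtype.val x 0 b := by
  rw [extend_val_apply x ha, hx ⟨a, ha⟩ ha0, LIdx,
    sum_filter_val_mem_eq_sum_extend x (Lset_subset_Omeg a t)]

variable {p : Fin (m + 1)} {x : OmegIdx r (m + 1) t → M}

lemma extend_insertNth_last_eq_sum (hx : SatisfiesChecks x)
    (ht : 2 ^ (p : ℕ) ≤ t) {γ : Fin m → Fin (r + 1)} (hγ : γ ∈ Omeg r m 0) :
    Function.extend Subtype.val x 0 (p.insertNth (Fin.last r) γ) =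
      ∑ c ∈ univ.filter (fun c : Fin (r + 1) => (c : ℕ) < r),
        Function.extend Subtype.val x 0 (p.insertNth c γ) := by
  rw [extend_eq_sum_Lset hx (insertNth_last_mem_Omeg_of_mem_Omeg_zero ht hγ)
      fun h => insertNth_last_not_mem_Omeg_two_pow_sub_one (Omeg_mono (Nat.zero_le _) h),
    sum_Lset_insertNth_last, Lset_eq_singleton hγ]
  simp only [sum_singleton]

lemma eq_sum_insertNth_Lset_of_lt (hx : SatisfiesChecks x)
    {j : Fin (r + 1)} (hj : (j : ℕ) < r) {α : Fin m → Fin (r + 1)} (hα0 : α ∉ Omeg r m 0)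
    (hmem : p.insertNth j α ∈ Omeg r (m + 1) t) :
    x ⟨p.insertNth j α, hmem⟩ =
      ∑ β ∈ univ.filter (fun β : OmegIdx r (m + 1) t =>
        β.1 ∈ (Lset r m α).image (fun γ => p.insertNth j γ)), x β := by
  have h0 : p.insertNth j α ∉ Omeg r (m + 1) 0 := by
    simpa using (insertNth_mem_Omeg_two_pow_sub_one_iff (k := 0) hj (Nat.zero_le _)).not.2 hα0
  have hL : ∀ γ ∈ Lset r m α, p.insertNth j γ ∈ Omeg r (m + 1) t := fun γ hγ =>
    Lset_subset_Omeg _ t (insertNth_mem_Lset_insertNth_iff.2 ⟨⟨hj, fun _ => rfl⟩, hγ⟩)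
  rw [sum_filter_val_mem_image_eq_sum_extend x (Fin.insertNth_right_injective j) hL,
    ← sum_Lset_insertNth_of_lt hj, ← extend_eq_sum_Lset hx hmem h0, extend_val_apply]

lemma eq_sum_insertNth_Lset_last (hx : SatisfiesChecks x)
    (ht : 2 ^ (p : ℕ) ≤ t) {α : Fin m → Fin (r + 1)}
    (hmem : p.insertNth (Fin.last r) α ∈ Omeg r (m + 1) t) :
    x ⟨p.insertNth (Fin.last r) α, hmem⟩ =
      ∑ β ∈ univ.filter (fun β : OmegIdx r (m + 1) t =>
        β.1 ∈ (Lset r m α).image (fun γ => p.insertNth (Fin.last r) γ)), x β := by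
  have h0 : p.insertNth (Fin.last r) α ∉ Omeg r (m + 1) 0 := fun h =>
    insertNth_last_not_mem_Omeg_two_pow_sub_one (Omeg_mono (Nat.zero_le _) h)
  have hL (γ) (hγ : γ ∈ Lset r m α) : γ ∈ Omeg r m 0 := Lset_subset_Omeg α 0 hγ
  rw [sum_filter_val_mem_image_eq_sum_extend x (Fin.insertNth_right_injective _)
      fun γ hγ => insertNth_last_mem_Omeg_of_mem_Omeg_zero ht (hL γ hγ),
    ← extend_val_apply x hmem, extend_eq_sum_Lset hx hmem h0, sum_Lset_insertNth_last, sum_comm]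
  exact sum_congr rfl fun γ hγ => (extend_insertNth_last_eq_sum hx ht (hL γ hγ)).symm

end checks

end

/-- The paper's dimension `m ≥ 2` is `m + 1` here, and `p : Fin (m + 1)` is the position
`m₀ - 1` counted from the right starting at `0`, so `t₁ = 2^p - 1`, `t₂ = t - t₁ - 1`, and
`ψ_j = Fin.insertNth p j`. -/
theorem punctured_parity_general (r m t : ℕ)
    (p : Fin (m + 1)) (hp1 : 2 ^ (p : ℕ) - 1 < t) (hp2 : t ≤ 2 ^ ((p : ℕ) + 1) - 1)
    (C : Submodule (ZMod 2) (OmegIdx r (m + 1) t → ZMod 2))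
    (hC : ∀ x ∈ C, ∀ α : OmegIdx r (m + 1) t, α.1 ∉ Omeg r (m + 1) 0 →
      x α = ∑ β ∈ LIdx r (m + 1) t α.1, x β) :
    (∀ j : Fin (r + 1), (j : ℕ) < r →
      (Set.BijOn (fun α : Fin m → Fin (r + 1) => p.insertNth j α)
        ↑(Omeg r m (2 ^ (p : ℕ) - 1))
        (((Omeg r (m + 1) (2 ^ (p : ℕ) - 1)).filter (fun α => α p = j) :
          Finset (Fin (m + 1) → Fin (r + 1))) : Set (Fin (m + 1) → Fin (r + 1))) ∧
      ∀ x ∈ C, ∀ α ∈ Omeg r m (2 ^ (p : ℕ) - 1), α ∉ Omeg r m 0 →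
        ∀ hmem : p.insertNth j α ∈ Omeg r (m + 1) t,
          x ⟨p.insertNth j α, hmem⟩ =
            ∑ β ∈ Finset.univ.filter (fun β : OmegIdx r (m + 1) t =>
                β.1 ∈ (Lset r m α).image (fun γ => p.insertNth j γ)), x β)) ∧
    (1 ≤ t - (2 ^ (p : ℕ) - 1) - 1 →
      (Set.BijOn (fun α : Fin m → Fin (r + 1) => p.insertNth (Fin.last r) α)
        ↑(Omeg r m (t - (2 ^ (p : ℕ) - 1) - 1))
        ((Omeg r (m + 1) t \ Omeg r (m + 1) (2 ^ (p : ℕ) - 1) :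
          Finset (Fin (m + 1) → Fin (r + 1))) : Set (Fin (m + 1) → Fin (r + 1))) ∧
      ∀ x ∈ C, ∀ α ∈ Omeg r m (t - (2 ^ (p : ℕ) - 1) - 1), α ∉ Omeg r m 0 →
        ∀ hmem : p.insertNth (Fin.last r) α ∈ Omeg r (m + 1) t,
          x ⟨p.insertNth (Fin.last r) α, hmem⟩ =
            ∑ β ∈ Finset.univ.filter (fun β : OmegIdx r (m + 1) t =>
                β.1 ∈ (Lset r m α).image (fun γ => p.insertNth (Fin.last r) γ)), x β)) := by
  have hpt : 2 ^ (p : ℕ) ≤ t := by omega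
  have htp : t < 2 ^ ((p : ℕ) + 1) := by omega
  refine ⟨fun j hj => ⟨?_, fun x hx α _ hα0 hmem => ?_⟩, fun _ => ⟨?_, fun x hx α _ _ hmem => ?_⟩⟩
  · refine bijOn_insertNth (fun α => ?_) fun b hb => (mem_filter.1 hb).2
    simp [insertNth_mem_Omeg_two_pow_sub_one_iff hj le_rfl]
  · exact eq_sum_insertNth_Lset_of_lt (hC x hx) hj hα0 hmem
  · rw [show t - (2 ^ (p : ℕ) - 1) - 1 = t - 2 ^ (p : ℕ) by omega]
    refine bijOn_insertNth (fun α => ?_) fun b hb => apply_eq_last_of_mem_Omeg_sdiff hb htp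
    simp [insertNth_last_mem_Omeg_iff hpt htp, insertNth_last_not_mem_Omeg_two_pow_sub_one]
  · exact eq_sum_insertNth_Lset_last (hC x hx) hpt hmem

/-- Lemma 6 (puncturing lemma), stated for total dimension `m + 1 ≥ 2` (i.e. the
paper's `m ≥ 2` with `m := m + 1`). Here `p : Fin (m+1)` is the (0-indexed from the
right) position `m₀ - 1`, `t₁ = 2^p - 1` and `t₂ = t - t₁ - 1`; `ψ_j` is
`Fin.insertNth p j`, insertion of `j` at position `p`;
`A = Ω_{t₁}^{(m+1)}`, `B = Ω_t^{(m+1)} \ A`, and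
`A_j = {α ∈ A : α_p = j}` for `j ∈ Z_r`. -/
theorem punctured_parity (r m t : ℕ) (hr : 2 ≤ r) (hm : 1 ≤ m)
    (ht1 : 1 ≤ t) (ht2 : t ≤ 2 ^ (m + 1) - 1)
    (p : Fin (m + 1)) (hp1 : 2 ^ (p : ℕ) - 1 < t) (hp2 : t ≤ 2 ^ ((p : ℕ) + 1) - 1)
    (C : Submodule (ZMod 2) (OmegIdx r (m + 1) t → ZMod 2))
    (hC : ∀ x ∈ C, ∀ α : OmegIdx r (m + 1) t, α.1 ∉ Omeg r (m + 1) 0 →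
      x α = ∑ β ∈ LIdx r (m + 1) t α.1, x β) :
    (∀ j : Fin (r + 1), (j : ℕ) < r →
      (Set.BijOn (fun α : Fin m → Fin (r + 1) => p.insertNth j α)
        ↑(Omeg r m (2 ^ (p : ℕ) - 1))
        (((Omeg r (m + 1) (2 ^ (p : ℕ) - 1)).filter (fun α => α p = j) :
          Finset (Fin (m + 1) → Fin (r + 1))) : Set (Fin (m + 1) → Fin (r + 1))) ∧
      ∀ x ∈ C, ∀ α ∈ Omeg r m (2 ^ (p : ℕ) - 1), α ∉ Omeg r m 0 →
        ∀ hmem : p.insertNth j α ∈ Omeg r (m + 1) t,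
          x ⟨p.insertNth j α, hmem⟩ =
            ∑ β ∈ Finset.univ.filter (fun β : OmegIdx r (m + 1) t =>
                β.1 ∈ (Lset r m α).image (fun γ => p.insertNth j γ)), x β)) ∧
    (1 ≤ t - (2 ^ (p : ℕ) - 1) - 1 →
      (Set.BijOn (fun α : Fin m → Fin (r + 1) => p.insertNth (Fin.last r) α)
        ↑(Omeg r m (t - (2 ^ (p : ℕ) - 1) - 1))
        ((Omeg r (m + 1) t \ Omeg r (m + 1) (2 ^ (p : ℕ) - 1) :
          Finset (Fin (m + 1) → Fin (r + 1))) : Set (Fin (m + 1) → Fin (r + 1))) ∧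
      ∀ x ∈ C, ∀ α ∈ Omeg r m (t - (2 ^ (p : ℕ) - 1) - 1), α ∉ Omeg r m 0 →
        ∀ hmem : p.insertNth (Fin.last r) α ∈ Omeg r (m + 1) t,
          x ⟨p.insertNth (Fin.last r) α, hmem⟩ =
            ∑ β ∈ Finset.univ.filter (fun β : OmegIdx r (m + 1) t =>
                β.1 ∈ (Lset r m α).image (fun γ => p.insertNth (Fin.last r) γ)), x β)) :=
  punctured_parity_general r m t p hp1 hp2 C hC
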